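/- Let H be a real inner product space, and let l_m : H → ℝ and l_s : H → ℝ be everywhere differentiable functions such that the gradient of l_m is β-Lipschitz for some β > 0 and ‖∇l_s(θ)‖ ≤ G for all θ, where G > 0. Let ε > 0. Then for every θ with ⟨∇l_m(θ), ∇l_s(θ)⟩ > ε and every learning rate η satisfying 0 < η < 2ε / (β G²), one step of gradient descent on the self-supervised loss strictly decreases the main loss: l_m(θ − η ∇l_s(θ)) < l_m(θ). -/

import Mathlib

/-!
Along the segment from `θ` the main loss is bounded by the quadratic model given by its gradient
at `θ` and the Lipschitz constant `β` of that gradient (the descent lemma). For the step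
`-η ∇l_s(θ)` the model predicts a change of `-η ⟪∇l_m, ∇l_s⟫ + β η² ‖∇l_s‖² / 2`, which is less than
`-η (ε - β η G² / 2)`, and this is negative exactly when `η < 2ε / (βG²)`.
-/

open scoped RealInnerProductSpace NNReal

section

variable {H : Type*} [NormedAddCommGroup H] [InnerProductSpace ℝ H] [CompleteSpace H]

theorem HasGradientAt.hasDerivAt_comp_add_smul {f : H → ℝ} {g x v : H} {t : ℝ}
    (hf : HasGradientAt f g (x + t • v)) :
    HasDerivAt (fun s : ℝ => f (x + s • v)) ⟪g, v⟫ t := by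
  have hline : HasDerivAt (fun s : ℝ => x + s • v) v t := by
    simpa using ((hasDerivAt_id t).smul_const v).const_add x
  simpa [Function.comp_def] using hf.hasFDerivAt.comp_hasDerivAt t hline

theorem apply_add_le_of_lipschitzWith_gradient {f : H → ℝ} {g : H → H} {K : ℝ≥0}
    (hf : ∀ x, HasGradientAt f (g x) x) (hg : LipschitzWith K g) (x v : H) :
    f (x + v) ≤ f x + ⟪g x, v⟫ + K / 2 * ‖v‖ ^ 2 := by
  set ψ : ℝ → ℝ := fun t => f (x + t • v) - t * ⟪g x, v⟫ - K / 2 * ‖v‖ ^ 2 * t ^ 2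
  have hψ : ∀ t, HasDerivAt ψ (⟪g (x + t • v) - g x, v⟫ - K * ‖v‖ ^ 2 * t) t := fun t => by
    refine ((((hf _).hasDerivAt_comp_add_smul).sub ((hasDerivAt_id t).mul_const _)).sub
      ((hasDerivAt_pow 2 t).const_mul (K / 2 * ‖v‖ ^ 2))).congr_deriv ?_
    rw [inner_sub_left]
    ring
  have hψ_nonpos : ∀ t ∈ interior (Set.Icc (0 : ℝ) 1),
      ⟪g (x + t • v) - g x, v⟫ - K * ‖v‖ ^ 2 * t ≤ 0 := by
    intro t ht
    rw [interior_Icc] at ht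
    have hdist : ‖g (x + t • v) - g x‖ ≤ K * (t * ‖v‖) := by
      simpa [dist_eq_norm, norm_smul, abs_of_pos ht.1] using hg.dist_le_mul (x + t • v) x
    rw [sub_nonpos]
    calc ⟪g (x + t • v) - g x, v⟫ ≤ ‖g (x + t • v) - g x‖ * ‖v‖ := real_inner_le_norm _ _
      _ ≤ K * (t * ‖v‖) * ‖v‖ := by gcongr
      _ = K * ‖v‖ ^ 2 * t := by ring
  have hanti : AntitoneOn ψ (Set.Icc 0 1) :=
    antitoneOn_of_hasDerivWithinAt_nonpos (convex_Icc 0 1)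
      (HasDerivAt.continuousOn fun t _ => hψ t) (fun t _ => (hψ t).hasDerivWithinAt) hψ_nonpos
  have h01 := hanti (by simp) (by simp) zero_le_one
  simp only [ψ, one_smul, one_pow, one_mul, mul_one, zero_smul, add_zero, zero_mul,
    zero_pow two_ne_zero, mul_zero, sub_zero] at h01
  linarith

theorem apply_sub_smul_lt_of_lipschitzWith_gradient {f : H → ℝ} {g : H → H} {K : ℝ≥0}
    (hf : ∀ x, HasGradientAt f (g x) x) (hg : LipschitzWith K g) {x u : H} {η : ℝ}
    (hη : 0 < η) (hstep : η * K * ‖u‖ ^ 2 < 2 * ⟪g x, u⟫) :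
    f (x - η • u) < f x := by
  have hdescent := apply_add_le_of_lipschitzWith_gradient hf hg x (-(η • u))
  rw [← sub_eq_add_neg, inner_neg_right, norm_neg, real_inner_smul_right, norm_smul,
    Real.norm_eq_abs, abs_of_pos hη] at hdescent
  nlinarith

end

theorem lethean_stmt5_general
    {H : Type*} [NormedAddCommGroup H] [InnerProductSpace ℝ H] [CompleteSpace H]
    (lm : H → ℝ) (gm gs : H → H)
    (hgm : ∀ θ : H, HasGradientAt lm (gm θ) θ)
    (β : ℝ)
    (hlip : LipschitzWith β.toNNReal gm)
    (G : ℝ)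
    (hbs : ∀ θ : H, ‖gs θ‖ ≤ G)
    (ε : ℝ) (hε : 0 < ε) :
    ∀ θ : H, ε < ⟪gm θ, gs θ⟫ →
      ∀ η : ℝ, 0 < η → η < 2 * ε / (β * G ^ 2) →
        lm (θ - η • gs θ) < lm θ := by
  intro θ hcorr η hη hηub
  have hβG : 0 < β * G ^ 2 := (div_pos_iff_of_pos_left (by positivity)).mp (hη.trans hηub)
  have hβ : 0 < β := pos_of_mul_pos_left hβG (sq_nonneg G)
  have hηβG : η * (β * G ^ 2) < 2 * ε := (lt_div_iff₀ hβG).mp hηub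
  refine apply_sub_smul_lt_of_lipschitzWith_gradient hgm hlip hη ?_
  have hgs_sq : ‖gs θ‖ ^ 2 ≤ G ^ 2 := pow_le_pow_left₀ (norm_nonneg _) (hbs θ) 2
  calc η * β.toNNReal * ‖gs θ‖ ^ 2 = η * β * ‖gs θ‖ ^ 2 := by rw [Real.coe_toNNReal β hβ.le]
    _ ≤ η * (β * G ^ 2) := by rw [← mul_assoc]; gcongr
    _ < 2 * ε := hηβG
    _ < 2 * ⟪gm θ, gs θ⟫ := by linarith

/-- Generalization of Theorem 1 to the full range of learning rates 0 < η < 2ε/(βG²):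
if the main and self-supervised gradients are positively correlated (inner product > ε),
one step of gradient descent on the self-supervised loss strictly decreases the main loss. -/
theorem lethean_stmt5
    {H : Type*} [NormedAddCommGroup H] [InnerProductSpace ℝ H] [CompleteSpace H]
    (lm ls : H → ℝ) (gm gs : H → H)
    (hgm : ∀ θ : H, HasGradientAt lm (gm θ) θ)
    (hgs : ∀ θ : H, HasGradientAt ls (gs θ) θ)
    (β : ℝ) (hβ : 0 < β)
    (hlip : LipschitzWith β.toNNReal gm)
    (G : ℝ) (hG : 0 < G)
    (hbs : ∀ θ : H, ‖gs θ‖ ≤ G)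
    (ε : ℝ) (hε : 0 < ε) :
    ∀ θ : H, ε < ⟪gm θ, gs θ⟫ →
      ∀ η : ℝ, 0 < η → η < 2 * ε / (β * G ^ 2) →
        lm (θ - η • gs θ) < lm θ :=
  lethean_stmt5_general lm gm gs hgm β hlip G hbs ε hε
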